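/- arXiv:1509.02954 — 4 statements merged into one kernel-verified Lean document; each statement's English description precedes it below -/
import Mathlib

section
/- (Theorem 3.1.) For all real numbers g_1, g_2, g_3, R_max and all nonnegative reals π_1, π_2, π_3, π_4, the depth-two tree empirical risk (R_max − π_1)·𝟙_{g_1≤0}·𝟙_{g_2≤0} + (R_max − π_2)·𝟙_{g_1≤0}·𝟙_{g_2>0} + (R_max − π_3)·𝟙_{g_1>0}·𝟙_{g_3≤0} + (R_max − π_4)·𝟙_{g_1>0}·𝟙_{g_3>0} equals R_max − (π_1+π_2+π_3+π_4) + max[ (π_3+π_4)·𝟙_{g_1≤0} + π_2·𝟙_{g_2≤0}, (π_3+π_4)·𝟙_{g_1≤0} + π_1·𝟙_{g_2>0}, (π_1+π_2)·𝟙_{g_1>0} + π_4·𝟙_{g_3≤0}, (π_1+π_2)·𝟙_{g_1>0} + π_3·𝟙_{g_3>0} ]. -/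
/-!
The root decision selects one subtree, and the identity reduces to the same identity for a
depth-one tree (a stump) there: its risk is `R_max − (p + q) + max (q 𝟙_{g≤0}) (p 𝟙_{g>0})`.
The two maxima of the inactive subtree are dropped because nonnegative savings keep them below
the total savings of the other pair of leaves, which the active side's maxima contain.
-/

section Stump

variable (g p q : ℝ)

lemma max_mul_ite_le_add (hp : 0 ≤ p) (hq : 0 ≤ q) :
    max (q * (if g ≤ 0 then (1 : ℝ) else 0)) (p * (if 0 < g then (1 : ℝ) else 0)) ≤ p + q := by
  apply max_le <;> split_ifs <;> linarith

lemma depth_one_risk_eq_max_form (Rmax : ℝ) (hp : 0 ≤ p) (hq : 0 ≤ q) :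
    (Rmax - p) * (if g ≤ 0 then (1 : ℝ) else 0) + (Rmax - q) * (if 0 < g then (1 : ℝ) else 0)
      = Rmax - (p + q)
        + max (q * (if g ≤ 0 then (1 : ℝ) else 0)) (p * (if 0 < g then (1 : ℝ) else 0)) := by
  rcases le_or_gt g 0 with hg | hg
  · simp only [hg, not_lt.mpr hg, if_true, if_false, mul_one, mul_zero, max_eq_left hq]
    ring
  · simp only [hg, not_le.mpr hg, if_true, if_false, mul_one, mul_zero, max_eq_right hp]
    ring

end Stump

/-- **Theorem 3.1.** The depth-two tree empirical risk equals
`R_max − (π₁+π₂+π₃+π₄)` plus a single maximum over the four leaf terms. -/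
theorem depth_two_risk_eq_max_form (g₁ g₂ g₃ Rmax : ℝ) (π₁ π₂ π₃ π₄ : ℝ)
    (h₁ : 0 ≤ π₁) (h₂ : 0 ≤ π₂) (h₃ : 0 ≤ π₃) (h₄ : 0 ≤ π₄) :
    (Rmax - π₁) * (if g₁ ≤ 0 then (1 : ℝ) else 0) * (if g₂ ≤ 0 then (1 : ℝ) else 0)
      + (Rmax - π₂) * (if g₁ ≤ 0 then (1 : ℝ) else 0) * (if 0 < g₂ then (1 : ℝ) else 0)
      + (Rmax - π₃) * (if 0 < g₁ then (1 : ℝ) else 0) * (if g₃ ≤ 0 then (1 : ℝ) else 0)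
      + (Rmax - π₄) * (if 0 < g₁ then (1 : ℝ) else 0) * (if 0 < g₃ then (1 : ℝ) else 0)
    = Rmax - (π₁ + π₂ + π₃ + π₄)
      + max (max ((π₃ + π₄) * (if g₁ ≤ 0 then (1 : ℝ) else 0) + π₂ * (if g₂ ≤ 0 then (1 : ℝ) else 0))
                ((π₃ + π₄) * (if g₁ ≤ 0 then (1 : ℝ) else 0) + π₁ * (if 0 < g₂ then (1 : ℝ) else 0)))
            (max ((π₁ + π₂) * (if 0 < g₁ then (1 : ℝ) else 0) + π₄ * (if g₃ ≤ 0 then (1 : ℝ) else 0))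
                ((π₁ + π₂) * (if 0 < g₁ then (1 : ℝ) else 0) + π₃ * (if 0 < g₃ then (1 : ℝ) else 0))) := by
  rcases le_or_gt g₁ 0 with hg₁ | hg₁
  · simp only [hg₁, not_lt.mpr hg₁, if_true, if_false, mul_one, mul_zero, zero_mul, add_zero,
      zero_add, max_add_add_left]
    have hinactive := max_mul_ite_le_add g₃ π₃ π₄ h₃ h₄
    rw [max_eq_left (hinactive.trans (le_add_of_nonneg_right (le_max_of_le_left (by positivity)))),
      depth_one_risk_eq_max_form g₂ π₁ π₂ Rmax h₁ h₂]
    ring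
  · simp only [hg₁, not_le.mpr hg₁, if_true, if_false, mul_one, mul_zero, zero_mul, add_zero,
      zero_add, max_add_add_left]
    have hinactive := max_mul_ite_le_add g₂ π₁ π₂ h₁ h₂
    rw [max_eq_right (hinactive.trans (le_add_of_nonneg_right (le_max_of_le_left (by positivity)))),
      depth_one_risk_eq_max_form g₃ π₃ π₄ Rmax h₃ h₄]
    ring
end

section
/- Let T be a sensor tree on K leaves with path matrices P, N, let π_1,…,π_K be real savings, and define the weight vectors w_{p,k}, w_{n,k} ∈ ℝ^{K−1} by (w_{p,k})_j = P_{k,j}·Σ_{l : N_{l,j}=1} π_l and (w_{n,k})_j = N_{k,j}·Σ_{l : P_{l,j}=1} π_l. If g = (g_1,…,g_{K−1}) are real decision values and k* is the leaf reached by g (i.e. G_{k*}(g) = 1), then the term of leaf k*, namely Σ_{j=1}^{K−1} (w_{p,k*})_j·𝟙_{g_j>0} + (w_{n,k*})_j·𝟙_{g_j≤0}, equals the total savings lost Σ_{l ≠ k*} π_l. -/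
/-- A full binary tree with leaves labeled by `L` and internal nodes labeled by `I`.
At each internal node, the first child is the negative branch and the second child is the
positive branch. -/
inductive BTree (L I : Type) : Type
  | leaf (k : L) : BTree L I
  | node (j : I) (neg pos : BTree L I) : BTree L I

namespace BTree

variable {L I : Type}

/-- The list of leaf labels of a binary tree. -/
def leaves : BTree L I → List L
  | .leaf k => [k]
  | .node _ t₁ t₂ => t₁.leaves ++ t₂.leaves

/-- The list of internal-node labels of a binary tree. -/
def nodes : BTree L I → List I
  | .leaf _ => []
  | .node j t₁ t₂ => j :: (t₁.nodes ++ t₂.nodes)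

variable [DecidableEq L] [DecidableEq I]

/-- Path matrix `P`: `Pmat T k j = 1` iff internal node `j` lies on the root-to-`k` path
and the path proceeds to the positive child of `j`; it is `0` otherwise. -/
def Pmat : BTree L I → L → I → ℕ
  | .leaf _, _, _ => 0
  | .node j t₁ t₂, k, j' =>
      if k ∈ t₂.leaves then (if j' = j then 1 else 0) + t₂.Pmat k j'
      else if k ∈ t₁.leaves then t₁.Pmat k j'
      else 0

/-- Path matrix `N`: `Nmat T k j = 1` iff internal node `j` lies on the root-to-`k` path
and the path proceeds to the negative child of `j`; it is `0` otherwise. -/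
def Nmat : BTree L I → L → I → ℕ
  | .leaf _, _, _ => 0
  | .node j t₁ t₂, k, j' =>
      if k ∈ t₂.leaves then t₂.Nmat k j'
      else if k ∈ t₁.leaves then (if j' = j then 1 else 0) + t₁.Nmat k j'
      else 0

end BTree

/-- A sensor tree on `K` leaves: a full binary tree whose `K` leaves are labeled bijectively
by `Fin K` and whose `K − 1` internal nodes are labeled bijectively by `Fin (K − 1)`. -/
structure SensorTree (K : ℕ) where
  tree : BTree (Fin K) (Fin (K - 1))
  leaves_nodup : tree.leaves.Nodup
  leaves_complete : ∀ k : Fin K, k ∈ tree.leaves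
  nodes_nodup : tree.nodes.Nodup
  nodes_complete : ∀ j : Fin (K - 1), j ∈ tree.nodes

theorem BTree.elim_of_isEmpty {L I : Type} [IsEmpty L] [IsEmpty I] (t : BTree L I) : False := by
  cases t with
  | leaf k => exact IsEmpty.false k
  | node j _ _ => exact IsEmpty.false j

theorem SensorTree.pos {K : ℕ} (T : SensorTree K) : 0 < K := by
  rcases Nat.eq_zero_or_pos K with h | h
  · subst h
    exact (BTree.elim_of_isEmpty (show BTree (Fin 0) (Fin 0) from T.tree)).elim
  · exact h

theorem SensorTree.univ_nonempty {K : ℕ} (T : SensorTree K) :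
    (Finset.univ : Finset (Fin K)).Nonempty :=
  ⟨⟨0, T.pos⟩, Finset.mem_univ _⟩

/-- The indicator `𝟙_P ∈ {0, 1}` of a proposition `P`, as a real number. -/
noncomputable def ind (P : Prop) [Decidable P] : ℝ := if P then 1 else 0

/-- The leaf state `G_k(g) = ∏_j (𝟙_{g_j>0})^{P_{k,j}} (𝟙_{g_j≤0})^{N_{k,j}}`, indicating
whether the decision values `g` route an example to leaf `k`. -/
noncomputable def leafState {K : ℕ} (T : SensorTree K) (g : Fin (K - 1) → ℝ) (k : Fin K) : ℝ :=
  ∏ j : Fin (K - 1), (ind (0 < g j)) ^ (T.tree.Pmat k j) * (ind (g j ≤ 0)) ^ (T.tree.Nmat k j)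

/-- The weight `(w_{p,k})_j = P_{k,j} · Σ_{l : N_{l,j}=1} π_l`. -/
noncomputable def wp {K : ℕ} (T : SensorTree K) (π : Fin K → ℝ) (k : Fin K)
    (j : Fin (K - 1)) : ℝ :=
  (T.tree.Pmat k j : ℝ) * ∑ l ∈ Finset.univ.filter (fun l => T.tree.Nmat l j = 1), π l

/-- The weight `(w_{n,k})_j = N_{k,j} · Σ_{l : P_{l,j}=1} π_l`. -/
noncomputable def wn {K : ℕ} (T : SensorTree K) (π : Fin K → ℝ) (k : Fin K)
    (j : Fin (K - 1)) : ℝ :=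
  (T.tree.Nmat k j : ℝ) * ∑ l ∈ Finset.univ.filter (fun l => T.tree.Pmat l j = 1), π l

/-! Wherever a weight of the reached leaf `k*` is nonzero, `G_{k*}(g) = 1` forces the indicator
it multiplies to be one, so the leaf-`k*` term is `Σ_j (w_{p,k*} + w_{n,k*})_j`, independently
of `g`. For each node `j` on the path to `k*` this adds the savings of the subtree below `j` that
the path leaves, and these subtrees partition the leaves other than `k*`. -/

namespace BTree

variable {L I : Type} [DecidableEq L] [DecidableEq I]

section PathMatrices

variable {j₀ j : I} {t₁ t₂ : BTree L I} {k : L}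

theorem Pmat_eq_zero_of_not_mem_leaves {t : BTree L I} (hk : k ∉ t.leaves) (j : I) :
    t.Pmat k j = 0 := by
  cases t <;> simp_all [Pmat, leaves]

theorem Nmat_eq_zero_of_not_mem_leaves {t : BTree L I} (hk : k ∉ t.leaves) (j : I) :
    t.Nmat k j = 0 := by
  cases t <;> simp_all [Nmat, leaves]

theorem Pmat_eq_zero_of_not_mem_nodes {t : BTree L I} (hj : j ∉ t.nodes) (k : L) :
    t.Pmat k j = 0 := by
  induction t with
  | leaf => rfl
  | node j₀ t₁ t₂ ih₁ ih₂ =>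
    simp only [nodes, List.mem_cons, List.mem_append, not_or] at hj
    simp [Pmat, hj.1, ih₁ hj.2.1, ih₂ hj.2.2]

theorem Nmat_eq_zero_of_not_mem_nodes {t : BTree L I} (hj : j ∉ t.nodes) (k : L) :
    t.Nmat k j = 0 := by
  induction t with
  | leaf => rfl
  | node j₀ t₁ t₂ ih₁ ih₂ =>
    simp only [nodes, List.mem_cons, List.mem_append, not_or] at hj
    simp [Nmat, hj.1, ih₁ hj.2.1, ih₂ hj.2.2]

theorem Pmat_node_root (h₁ : j₀ ∉ t₁.nodes) (h₂ : j₀ ∉ t₂.nodes) (k : L) :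
    (node j₀ t₁ t₂).Pmat k j₀ = if k ∈ t₂.leaves then 1 else 0 := by
  simp only [Pmat, if_true, Pmat_eq_zero_of_not_mem_nodes h₁,
    Pmat_eq_zero_of_not_mem_nodes h₂, ite_self, add_zero]

theorem Nmat_node_root (hdisj : t₁.leaves.Disjoint t₂.leaves) (h₁ : j₀ ∉ t₁.nodes)
    (h₂ : j₀ ∉ t₂.nodes) (k : L) :
    (node j₀ t₁ t₂).Nmat k j₀ = if k ∈ t₁.leaves then 1 else 0 := by
  simp only [Nmat, Nmat_eq_zero_of_not_mem_nodes h₁, Nmat_eq_zero_of_not_mem_nodes h₂]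
  split_ifs with hk₂ hk₁ <;> first | rfl | exact absurd hk₂ (hdisj ‹_›)

theorem Pmat_node_of_ne_of_not_mem_right (hdisj : t₁.leaves.Disjoint t₂.leaves) (hj : j ≠ j₀)
    (h₂ : j ∉ t₂.nodes) (k : L) : (node j₀ t₁ t₂).Pmat k j = t₁.Pmat k j := by
  simp only [Pmat, if_neg hj, Pmat_eq_zero_of_not_mem_nodes h₂]
  split_ifs with hk₂ hk₁
  · exact (Pmat_eq_zero_of_not_mem_leaves (fun h => hdisj h hk₂) j).symm
  · rfl
  · exact (Pmat_eq_zero_of_not_mem_leaves hk₁ j).symm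

theorem Nmat_node_of_ne_of_not_mem_right (hdisj : t₁.leaves.Disjoint t₂.leaves) (hj : j ≠ j₀)
    (h₂ : j ∉ t₂.nodes) (k : L) : (node j₀ t₁ t₂).Nmat k j = t₁.Nmat k j := by
  simp only [Nmat, if_neg hj, Nmat_eq_zero_of_not_mem_nodes h₂, zero_add]
  split_ifs with hk₂ hk₁
  · exact (Nmat_eq_zero_of_not_mem_leaves (fun h => hdisj h hk₂) j).symm
  · rfl
  · exact (Nmat_eq_zero_of_not_mem_leaves hk₁ j).symm

theorem Pmat_node_of_ne_of_not_mem_left (hj : j ≠ j₀) (h₁ : j ∉ t₁.nodes) (k : L) :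
    (node j₀ t₁ t₂).Pmat k j = t₂.Pmat k j := by
  simp only [Pmat, if_neg hj, Pmat_eq_zero_of_not_mem_nodes h₁, zero_add, ite_self]
  split_ifs with hk₂
  · rfl
  · exact (Pmat_eq_zero_of_not_mem_leaves hk₂ j).symm

theorem Nmat_node_of_ne_of_not_mem_left (hj : j ≠ j₀) (h₁ : j ∉ t₁.nodes) (k : L) :
    (node j₀ t₁ t₂).Nmat k j = t₂.Nmat k j := by
  simp only [Nmat, if_neg hj, Nmat_eq_zero_of_not_mem_nodes h₁, zero_add, ite_self]
  split_ifs with hk₂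
  · rfl
  · exact (Nmat_eq_zero_of_not_mem_leaves hk₂ j).symm

end PathMatrices

variable [Fintype L]

/-- `(w_{p,k} + w_{n,k})_j`, for an arbitrary tree. -/
noncomputable def splitWeight (t : BTree L I) (π : L → ℝ) (k : L) (j : I) : ℝ :=
  (t.Pmat k j : ℝ) * ∑ l ∈ Finset.univ.filter (fun l => t.Nmat l j = 1), π l
    + (t.Nmat k j : ℝ) * ∑ l ∈ Finset.univ.filter (fun l => t.Pmat l j = 1), π l

section SplitWeight

variable {j₀ j : I} {t₁ t₂ : BTree L I} {π : L → ℝ} {k : L}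

theorem splitWeight_eq_zero_of_not_mem_leaves {t : BTree L I} (hk : k ∉ t.leaves) (j : I) :
    t.splitWeight π k j = 0 := by
  simp [splitWeight, Pmat_eq_zero_of_not_mem_leaves hk, Nmat_eq_zero_of_not_mem_leaves hk]

theorem splitWeight_node_of_ne_of_not_mem_right (hdisj : t₁.leaves.Disjoint t₂.leaves)
    (hj : j ≠ j₀) (h₂ : j ∉ t₂.nodes) :
    (node j₀ t₁ t₂).splitWeight π k j = t₁.splitWeight π k j := by
  simp only [splitWeight, Pmat_node_of_ne_of_not_mem_right hdisj hj h₂,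
    Nmat_node_of_ne_of_not_mem_right hdisj hj h₂]

theorem splitWeight_node_of_ne_of_not_mem_left (hj : j ≠ j₀) (h₁ : j ∉ t₁.nodes) :
    (node j₀ t₁ t₂).splitWeight π k j = t₂.splitWeight π k j := by
  simp only [splitWeight, Pmat_node_of_ne_of_not_mem_left hj h₁,
    Nmat_node_of_ne_of_not_mem_left hj h₁]

theorem splitWeight_node_root (hdisj : t₁.leaves.Disjoint t₂.leaves) (h₁ : j₀ ∉ t₁.nodes)
    (h₂ : j₀ ∉ t₂.nodes) (k : L) :
    (node j₀ t₁ t₂).splitWeight π k j₀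
      = (if k ∈ t₁.leaves then ∑ l ∈ t₂.leaves.toFinset, π l else 0)
        + (if k ∈ t₂.leaves then ∑ l ∈ t₁.leaves.toFinset, π l else 0) := by
  have hfilter (t : BTree L I) (f : L → ℕ) (hf : ∀ l, f l = if l ∈ t.leaves then 1 else 0) :
      Finset.univ.filter (fun l => f l = 1) = t.leaves.toFinset := by
    ext l
    by_cases hl : l ∈ t.leaves <;> simp [hf, hl]
  rw [splitWeight, hfilter t₁ _ (Nmat_node_root hdisj h₁ h₂),
    hfilter t₂ _ (Pmat_node_root h₁ h₂), Pmat_node_root h₁ h₂, Nmat_node_root hdisj h₁ h₂]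
  split_ifs <;> simp [add_comm]

end SplitWeight

theorem sum_splitWeight {t : BTree L I} (hl : t.leaves.Nodup) (hn : t.nodes.Nodup) (π : L → ℝ)
    {k : L} (hk : k ∈ t.leaves) :
    ∑ j ∈ t.nodes.toFinset, t.splitWeight π k j = ∑ l ∈ t.leaves.toFinset, π l - π k := by
  induction t with
  | leaf k₀ =>
    simp_all [leaves, nodes]
  | node j₀ t₁ t₂ ih₁ ih₂ =>
    simp only [leaves, List.nodup_append'] at hl
    obtain ⟨hl₁, hl₂, hdisj⟩ := hl
    simp only [nodes, List.nodup_cons, List.mem_append, not_or, List.nodup_append'] at hn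
    obtain ⟨⟨hj₁, hj₂⟩, hn₁, hn₂, hndisj⟩ := hn
    have hsplit : ∑ j ∈ (node j₀ t₁ t₂).nodes.toFinset, (node j₀ t₁ t₂).splitWeight π k j
        = (node j₀ t₁ t₂).splitWeight π k j₀ + ∑ j ∈ t₁.nodes.toFinset, t₁.splitWeight π k j
          + ∑ j ∈ t₂.nodes.toFinset, t₂.splitWeight π k j := by
      rw [nodes, List.toFinset_cons, List.toFinset_append,
        Finset.sum_insert (by simp [hj₁, hj₂]),
        Finset.sum_union (List.disjoint_toFinset_iff_disjoint.mpr hndisj), add_assoc]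
      congr 2 <;> refine Finset.sum_congr rfl fun j hj => ?_
      · have hj : j ∈ t₁.nodes := List.mem_toFinset.mp hj
        exact splitWeight_node_of_ne_of_not_mem_right hdisj (by rintro rfl; exact hj₁ hj)
          (hndisj hj)
      · have hj : j ∈ t₂.nodes := List.mem_toFinset.mp hj
        exact splitWeight_node_of_ne_of_not_mem_left (by rintro rfl; exact hj₂ hj)
          (fun h => hndisj h hj)
    rw [hsplit, splitWeight_node_root hdisj hj₁ hj₂, leaves, List.toFinset_append,
      Finset.sum_union (List.disjoint_toFinset_iff_disjoint.mpr hdisj)]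
    rcases List.mem_append.mp hk with hk₁ | hk₂
    · have hk₂ : k ∉ t₂.leaves := fun h => hdisj hk₁ h
      rw [ih₁ hl₁ hn₁ hk₁,
        Finset.sum_eq_zero fun j _ => splitWeight_eq_zero_of_not_mem_leaves hk₂ j]
      simp [hk₁, hk₂]
      ring
    · have hk₁ : k ∉ t₁.leaves := fun h => hdisj h hk₂
      rw [ih₂ hl₂ hn₂ hk₂,
        Finset.sum_eq_zero fun j _ => splitWeight_eq_zero_of_not_mem_leaves hk₁ j]
      simp [hk₁, hk₂]
      ring

end BTree

theorem natCast_mul_ind_of_ind_pow_ne_zero {P : Prop} [Decidable P] {n : ℕ}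
    (h : ind P ^ n ≠ 0) : (n : ℝ) * ind P = n := by
  by_cases hP : P
  · simp [ind, hP]
  · have hn : n = 0 := by
      by_contra hn
      simp [ind, hP, hn] at h
    simp [hn]

/-- If `k*` is the leaf reached by the decision values `g`, then the leaf-`k*` term of the
reformulated risk equals the total savings lost `Σ_{l ≠ k*} π_l`. -/
theorem reached_leaf_term_eq_savings_lost {K : ℕ} (T : SensorTree K) (π : Fin K → ℝ)
    (g : Fin (K - 1) → ℝ) (kstar : Fin K) (hreach : leafState T g kstar = 1) :
    ∑ j : Fin (K - 1), (wp T π kstar j * ind (0 < g j) + wn T π kstar j * ind (g j ≤ 0))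
      = ∑ l ∈ Finset.univ.erase kstar, π l := by
  have hfactor (j : Fin (K - 1)) :
      ind (0 < g j) ^ T.tree.Pmat kstar j * ind (g j ≤ 0) ^ T.tree.Nmat kstar j ≠ 0 :=
    Finset.prod_ne_zero_iff.mp (by rw [← leafState, hreach]; exact one_ne_zero) j (by simp)
  have huniv_leaves : (Finset.univ : Finset (Fin K)) = T.tree.leaves.toFinset :=
    (Finset.eq_univ_of_forall fun l => List.mem_toFinset.mpr (T.leaves_complete l)).symm
  have huniv_nodes : (Finset.univ : Finset (Fin (K - 1))) = T.tree.nodes.toFinset :=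
    (Finset.eq_univ_of_forall fun j => List.mem_toFinset.mpr (T.nodes_complete j)).symm
  calc _ = ∑ j ∈ T.tree.nodes.toFinset, T.tree.splitWeight π kstar j := by
        rw [← huniv_nodes]
        refine Finset.sum_congr rfl fun j _ => ?_
        obtain ⟨hP, hN⟩ := mul_ne_zero_iff.mp (hfactor j)
        rw [wp, wn, BTree.splitWeight, mul_right_comm, natCast_mul_ind_of_ind_pow_ne_zero hP,
          mul_right_comm, natCast_mul_ind_of_ind_pow_ne_zero hN]
    _ = ∑ l ∈ Finset.univ.erase kstar, π l := by
        rw [BTree.sum_splitWeight T.leaves_nodup T.nodes_nodup π (T.leaves_complete kstar),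
          Finset.sum_erase_eq_sub (Finset.mem_univ kstar), huniv_leaves]
end

section
/- Let T be a sensor tree on K leaves with path matrices P, N, let π_1,…,π_K be nonnegative real savings, and define the weight vectors w_{p,k}, w_{n,k} ∈ ℝ^{K−1} by (w_{p,k})_j = P_{k,j}·Σ_{l : N_{l,j}=1} π_l and (w_{n,k})_j = N_{k,j}·Σ_{l : P_{l,j}=1} π_l. If g = (g_1,…,g_{K−1}) are real decision values and k* is the leaf reached by g (i.e. G_{k*}(g) = 1), then for every leaf k, Σ_{j=1}^{K−1} (w_{p,k})_j·𝟙_{g_j>0} + (w_{n,k})_j·𝟙_{g_j≤0} ≤ Σ_{l ≠ k*} π_l; that is, the term of the reached leaf is a maximizer among all K leaf terms. -/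
namespace BTree

variable {L I : Type}

theorem nodes_nodup_node {j : I} {t₁ t₂ : BTree L I} (h : (node j t₁ t₂).nodes.Nodup) :
    j ∉ t₁.nodes ∧ j ∉ t₂.nodes ∧ t₁.nodes.Nodup ∧ t₂.nodes.Nodup ∧
      t₁.nodes.Disjoint t₂.nodes := by
  simpa [nodes, List.nodup_append', not_or, and_assoc] using h

variable [DecidableEq L] [DecidableEq I]

theorem Pmat_eq_zero_of_notMem : ∀ {t : BTree L I} {j : I}, j ∉ t.nodes → ∀ k, t.Pmat k j = 0
  | leaf _, _, _, _ => rfl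
  | node _ _ _, _, h, k => by
    simp only [nodes, List.mem_cons, List.mem_append, not_or] at h
    simp only [Pmat, if_neg h.1, Pmat_eq_zero_of_notMem h.2.1, Pmat_eq_zero_of_notMem h.2.2]
    split_ifs <;> rfl

theorem Nmat_eq_zero_of_notMem : ∀ {t : BTree L I} {j : I}, j ∉ t.nodes → ∀ k, t.Nmat k j = 0
  | leaf _, _, _, _ => rfl
  | node _ _ _, _, h, k => by
    simp only [nodes, List.mem_cons, List.mem_append, not_or] at h
    simp only [Nmat, if_neg h.1, Nmat_eq_zero_of_notMem h.2.1, Nmat_eq_zero_of_notMem h.2.2]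
    split_ifs <;> rfl

theorem Pmat_le_one : ∀ {t : BTree L I}, t.nodes.Nodup → ∀ k j, t.Pmat k j ≤ 1
  | leaf _, _, _, _ => zero_le_one
  | node j' _ _, h, k, j => by
    obtain ⟨-, hj₂, h₁, h₂, -⟩ := nodes_nodup_node h
    simp only [Pmat]
    split_ifs with _ hj
    · rw [hj, Pmat_eq_zero_of_notMem hj₂]
    · exact (zero_add _).trans_le (Pmat_le_one h₂ k j)
    · exact Pmat_le_one h₁ k j
    · exact zero_le_one

theorem Nmat_le_one : ∀ {t : BTree L I}, t.nodes.Nodup → ∀ k j, t.Nmat k j ≤ 1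
  | leaf _, _, _, _ => zero_le_one
  | node j' _ _, h, k, j => by
    obtain ⟨hj₁, -, h₁, h₂, -⟩ := nodes_nodup_node h
    simp only [Nmat]
    split_ifs with _ _ hj
    · exact Nmat_le_one h₂ k j
    · rw [hj, Nmat_eq_zero_of_notMem hj₁]
    · exact (zero_add _).trans_le (Nmat_le_one h₁ k j)
    · exact zero_le_one

def splits (t : BTree L I) (k l : L) (j : I) : ℕ :=
  t.Pmat k j * t.Nmat l j + t.Nmat k j * t.Pmat l j

theorem splits_node_cases {j' : I} {t₁ t₂ : BTree L I} (h : (node j' t₁ t₂).nodes.Nodup)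
    (k l : L) :
    (node j' t₁ t₂).splits k l = t₁.splits k l ∨ (node j' t₁ t₂).splits k l = t₂.splits k l ∨
      ∀ j, (node j' t₁ t₂).splits k l j ≤ if j = j' then 1 else 0 := by
  obtain ⟨hj₁, hj₂, -, -, hdisj⟩ := nodes_nodup_node h
  have zero₁ {j : I} (hj : j ∉ t₁.nodes) (k) : t₁.Pmat k j = 0 ∧ t₁.Nmat k j = 0 :=
    ⟨Pmat_eq_zero_of_notMem hj k, Nmat_eq_zero_of_notMem hj k⟩
  have zero₂ {j : I} (hj : j ∉ t₂.nodes) (k) : t₂.Pmat k j = 0 ∧ t₂.Nmat k j = 0 :=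
    ⟨Pmat_eq_zero_of_notMem hj k, Nmat_eq_zero_of_notMem hj k⟩
  refine if h₂ : k ∈ t₂.leaves ∧ l ∈ t₂.leaves then Or.inr (Or.inl (funext fun j => ?_))
    else if h₁ : k ∈ t₁.leaves ∧ k ∉ t₂.leaves ∧ l ∈ t₁.leaves ∧ l ∉ t₂.leaves then
      Or.inl (funext fun j => ?_)
    else Or.inr (Or.inr fun j => ?_)
  all_goals
    have hj : j = j' ∨ j ≠ j' ∧ j ∉ t₁.nodes ∨ j ≠ j' ∧ j ∉ t₂.nodes := by
      by_cases hj : j = j'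
      · exact Or.inl hj
      by_cases hj₁ : j ∈ t₁.nodes
      exacts [Or.inr (Or.inr ⟨hj, hdisj hj₁⟩), Or.inr (Or.inl ⟨hj, hj₁⟩)]
    rcases hj with rfl | ⟨_, _⟩ | ⟨_, _⟩ <;>
      by_cases hk₂ : k ∈ t₂.leaves <;> by_cases hl₂ : l ∈ t₂.leaves <;>
      by_cases hk₁ : k ∈ t₁.leaves <;> by_cases hl₁ : l ∈ t₁.leaves <;>
      simp_all [splits, Pmat, Nmat]

theorem sum_splits_le_one [Fintype I] :
    ∀ {t : BTree L I}, t.nodes.Nodup → ∀ k l, ∑ j, t.splits k l j ≤ 1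
  | leaf _, _, _, _ => by simp [splits, Pmat, Nmat]
  | node j' _ _, h, k, l => by
    obtain ⟨-, -, h₁, h₂, -⟩ := nodes_nodup_node h
    rcases splits_node_cases h k l with e | e | e
    · exact e ▸ sum_splits_le_one h₁ k l
    · exact e ▸ sum_splits_le_one h₂ k l
    · calc ∑ j, (node j' _ _).splits k l j ≤ ∑ j, if j = j' then 1 else 0 :=
            Finset.sum_le_sum fun j _ => e j
        _ = 1 := by simp

end BTree

theorem Finset.sum_filter_eq_one_eq_sum_mul {ι R : Type*} [Semiring R] (s : Finset ι)
    (f : ι → ℕ) (hf : ∀ i ∈ s, f i ≤ 1) (π : ι → R) :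
    ∑ i ∈ s.filter (fun i => f i = 1), π i = ∑ i ∈ s, (f i : R) * π i := by
  rw [Finset.sum_filter]
  refine Finset.sum_congr rfl fun i hi => ?_
  rcases Nat.le_one_iff_eq_zero_or_eq_one.mp (hf i hi) with h | h <;> simp [h]

theorem ind_le_one (P : Prop) [Decidable P] : ind P ≤ 1 := by
  unfold ind; split_ifs <;> norm_num

namespace SensorTree

variable {K : ℕ} (T : SensorTree K)

theorem wp_eq_sum (π : Fin K → ℝ) (k : Fin K) (j : Fin (K - 1)) :
    wp T π k j = ∑ l, (T.tree.Pmat k j * T.tree.Nmat l j : ℝ) * π l := by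
  rw [wp, Finset.sum_filter_eq_one_eq_sum_mul _ _ fun l _ => T.tree.Nmat_le_one T.nodes_nodup l j,
    Finset.mul_sum]
  simp only [mul_assoc]

theorem wn_eq_sum (π : Fin K → ℝ) (k : Fin K) (j : Fin (K - 1)) :
    wn T π k j = ∑ l, (T.tree.Nmat k j * T.tree.Pmat l j : ℝ) * π l := by
  rw [wn, Finset.sum_filter_eq_one_eq_sum_mul _ _ fun l _ => T.tree.Pmat_le_one T.nodes_nodup l j,
    Finset.mul_sum]
  simp only [mul_assoc]

noncomputable def leafCoeff (g : Fin (K - 1) → ℝ) (k l : Fin K) (j : Fin (K - 1)) : ℝ :=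
  (T.tree.Pmat k j * T.tree.Nmat l j : ℝ) * ind (0 < g j)
    + (T.tree.Nmat k j * T.tree.Pmat l j : ℝ) * ind (g j ≤ 0)

variable {T} {g : Fin (K - 1) → ℝ} {k : Fin K}

theorem pos_of_leafState_eq_one (h : leafState T g k = 1) {j : Fin (K - 1)}
    (hj : T.tree.Pmat k j ≠ 0) : 0 < g j := by
  by_contra hg
  refine one_ne_zero (h.symm.trans (Finset.prod_eq_zero (Finset.mem_univ j) ?_))
  simp [ind, hg, hj]

theorem nonpos_of_leafState_eq_one (h : leafState T g k = 1) {j : Fin (K - 1)}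
    (hj : T.tree.Nmat k j ≠ 0) : g j ≤ 0 := by
  by_contra hg
  refine one_ne_zero (h.symm.trans (Finset.prod_eq_zero (Finset.mem_univ j) ?_))
  simp [ind, hg, hj]

theorem sum_wp_add_wn_eq_sum_leafCoeff (π : Fin K → ℝ) :
    ∑ j, (wp T π k j * ind (0 < g j) + wn T π k j * ind (g j ≤ 0))
      = ∑ j, ∑ l, leafCoeff T g k l j * π l := by
  refine Finset.sum_congr rfl fun j _ => ?_
  simp only [wp_eq_sum, wn_eq_sum, Finset.sum_mul, ← Finset.sum_add_distrib, leafCoeff]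
  exact Finset.sum_congr rfl fun l _ => by ring

theorem leafCoeff_le_splits (l : Fin K) (j : Fin (K - 1)) :
    leafCoeff T g k l j ≤ T.tree.splits k l j := by
  rw [leafCoeff, BTree.splits]
  push_cast
  exact add_le_add (mul_le_of_le_one_right (by positivity) (ind_le_one _))
    (mul_le_of_le_one_right (by positivity) (ind_le_one _))

theorem leafCoeff_eq_zero_of_leafState_eq_one {kstar : Fin K} (h : leafState T g kstar = 1)
    (j : Fin (K - 1)) : leafCoeff T g k kstar j = 0 := by
  have hpos : (T.tree.Nmat kstar j : ℝ) * ind (0 < g j) = 0 := by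
    by_cases hN : T.tree.Nmat kstar j = 0
    · simp [hN]
    · simp [ind, not_lt.mpr (nonpos_of_leafState_eq_one h hN)]
  have hneg : (T.tree.Pmat kstar j : ℝ) * ind (g j ≤ 0) = 0 := by
    by_cases hP : T.tree.Pmat kstar j = 0
    · simp [hP]
    · simp [ind, pos_of_leafState_eq_one h hP]
  rw [leafCoeff]
  linear_combination (T.tree.Pmat k j : ℝ) * hpos + (T.tree.Nmat k j : ℝ) * hneg

end SensorTree

/-- If `k*` is the leaf reached by the decision values `g` and the savings are nonnegative,
then every leaf term of the reformulated risk is at most `Σ_{l ≠ k*} π_l`; that is, the term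
of the reached leaf is a maximizer among all `K` leaf terms. -/
theorem leaf_terms_le_savings_lost {K : ℕ} (T : SensorTree K) (π : Fin K → ℝ)
    (hπ : ∀ l, 0 ≤ π l) (g : Fin (K - 1) → ℝ) (kstar : Fin K)
    (hreach : leafState T g kstar = 1) (k : Fin K) :
    ∑ j : Fin (K - 1), (wp T π k j * ind (0 < g j) + wn T π k j * ind (g j ≤ 0))
      ≤ ∑ l ∈ Finset.univ.erase kstar, π l := by
  calc ∑ j, (wp T π k j * ind (0 < g j) + wn T π k j * ind (g j ≤ 0))
      = ∑ j, ∑ l ∈ Finset.univ.erase kstar, T.leafCoeff g k l j * π l := by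
        rw [T.sum_wp_add_wn_eq_sum_leafCoeff]
        refine Finset.sum_congr rfl fun j _ => (Finset.sum_erase _ ?_).symm
        rw [T.leafCoeff_eq_zero_of_leafState_eq_one hreach, zero_mul]
    _ ≤ ∑ j, ∑ l ∈ Finset.univ.erase kstar, (T.tree.splits k l j : ℝ) * π l := by
        gcongr with j _ l _
        · exact hπ l
        · exact T.leafCoeff_le_splits l j
    _ = ∑ l ∈ Finset.univ.erase kstar, ((∑ j, T.tree.splits k l j : ℕ) : ℝ) * π l := by
        rw [Finset.sum_comm]
        simp only [Nat.cast_sum, Finset.sum_mul]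
    _ ≤ ∑ l ∈ Finset.univ.erase kstar, π l := by
        refine Finset.sum_le_sum fun l _ => mul_le_of_le_one_left (hπ l) ?_
        exact_mod_cast T.tree.sum_splits_le_one T.nodes_nodup k l
end

section
/- Let T be a sensor tree on K leaves with path matrices P, N, let R_max ∈ ℝ, let π_1,…,π_K ≥ 0, and define the weight vectors w_{p,k}, w_{n,k} ∈ ℝ^{K−1} by (w_{p,k})_j = P_{k,j}·Σ_{l : N_{l,j}=1} π_l and (w_{n,k})_j = N_{k,j}·Σ_{l : P_{l,j}=1} π_l. Let φ : ℝ → ℝ satisfy φ(z) ≥ 0 for all z and φ(z) ≥ 1 for all z ≥ 0 (so that φ(g) ≥ 𝟙_{g>0} and φ(−g) ≥ 𝟙_{g≤0} for every real g). Then for all real decision values g = (g_1,…,g_{K−1}), the empirical tree risk Σ_{k=1}^{K} (R_max − π_k)·G_k(g) is at most the surrogate risk R_max − Σ_{k=1}^{K} π_k + max_{k ∈ {1,…,K}} [ Σ_{j=1}^{K−1} (w_{p,k})_j·φ(g_j) + (w_{n,k})_j·φ(−g_j) ]. -/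
namespace BTree

variable {L I : Type} [DecidableEq L] [DecidableEq I]

theorem Pmat_eq_zero_of_notMem_nodes (t : BTree L I) (k : L) {j : I} (hj : j ∉ t.nodes) :
    t.Pmat k j = 0 := by
  induction t with
  | leaf => rfl
  | node j' t₁ t₂ ih₁ ih₂ =>
    simp only [nodes, List.mem_cons, List.mem_append, not_or] at hj
    simp [Pmat, hj.1, ih₁ hj.2.1, ih₂ hj.2.2]

theorem Nmat_eq_zero_of_notMem_nodes (t : BTree L I) (k : L) {j : I} (hj : j ∉ t.nodes) :
    t.Nmat k j = 0 := by
  induction t with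
  | leaf => rfl
  | node j' t₁ t₂ ih₁ ih₂ =>
    simp only [nodes, List.mem_cons, List.mem_append, not_or] at hj
    simp [Nmat, hj.1, ih₁ hj.2.1, ih₂ hj.2.2]

theorem Pmat_add_Nmat_le_one {t : BTree L I} (hnd : t.nodes.Nodup) (k : L) (j : I) :
    t.Pmat k j + t.Nmat k j ≤ 1 := by
  induction t with
  | leaf => simp [Pmat, Nmat]
  | node j' t₁ t₂ ih₁ ih₂ =>
    simp only [nodes, List.nodup_cons, List.nodup_append, List.mem_append, not_or] at hnd
    obtain ⟨⟨h₁, h₂⟩, hnd₁, hnd₂, -⟩ := hnd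
    by_cases hj : j = j'
    · subst hj
      simp only [Pmat, Nmat, if_true, Pmat_eq_zero_of_notMem_nodes _ _ h₁,
        Pmat_eq_zero_of_notMem_nodes _ _ h₂, Nmat_eq_zero_of_notMem_nodes _ _ h₁,
        Nmat_eq_zero_of_notMem_nodes _ _ h₂]
      split_ifs <;> simp
    · have := ih₁ hnd₁
      have := ih₂ hnd₂
      simp only [Pmat, Nmat, hj, if_false, zero_add]
      split_ifs <;> omega

theorem exists_diverging_node {t : BTree L I} {k l : L} (hk : k ∈ t.leaves) (hl : l ∈ t.leaves)
    (hkl : k ≠ l) :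
    ∃ j, (t.Pmat k j ≠ 0 ∧ t.Nmat l j ≠ 0) ∨ (t.Nmat k j ≠ 0 ∧ t.Pmat l j ≠ 0) := by
  induction t with
  | leaf => simp_all [leaves]
  | node j t₁ t₂ ih₁ ih₂ =>
    simp only [leaves, List.mem_append] at hk hl
    by_cases hk₂ : k ∈ t₂.leaves <;> by_cases hl₂ : l ∈ t₂.leaves
    · obtain ⟨j', h⟩ := ih₂ hk₂ hl₂
      exact ⟨j', by simp [Pmat, Nmat, hk₂, hl₂]; tauto⟩
    · exact ⟨j, .inl (by simp [Pmat, Nmat, hk₂, hl₂, hl.resolve_right hl₂])⟩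
    · exact ⟨j, .inr (by simp [Pmat, Nmat, hk₂, hl₂, hk.resolve_right hk₂])⟩
    · have hk₁ := hk.resolve_right hk₂
      have hl₁ := hl.resolve_right hl₂
      obtain ⟨j', h⟩ := ih₁ hk₁ hl₁
      exact ⟨j', by simp [Pmat, Nmat, hk₁, hl₁, hk₂, hl₂]; tauto⟩

def RoutesTo (t : BTree L I) (g : I → ℝ) (k : L) : Prop :=
  (∀ j, t.Pmat k j ≠ 0 → 0 < g j) ∧ (∀ j, t.Nmat k j ≠ 0 → g j ≤ 0)

theorem exists_routesTo {t : BTree L I} (hnd : t.leaves.Nodup) (g : I → ℝ) :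
    ∃ k ∈ t.leaves, t.RoutesTo g k := by
  induction t with
  | leaf k => exact ⟨k, by simp [leaves], by simp [RoutesTo, Pmat, Nmat]⟩
  | node j t₁ t₂ ih₁ ih₂ =>
    rw [leaves, List.nodup_append] at hnd
    obtain ⟨hnd₁, hnd₂, hdisj⟩ := hnd
    by_cases hg : 0 < g j
    · obtain ⟨k, hk, hP, hN⟩ := ih₂ hnd₂
      refine ⟨k, by simp [leaves, hk], fun j' h => ?_,
        fun j' h => hN j' (by simpa [Nmat, hk] using h)⟩
      by_cases hj : j' = j
      · rwa [hj]
      · exact hP j' (by simpa [Pmat, hk, hj] using h)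
    · obtain ⟨k, hk, hP, hN⟩ := ih₁ hnd₁
      have hk₂ : k ∉ t₂.leaves := fun h => hdisj k hk k h rfl
      refine ⟨k, by simp [leaves, hk], fun j' h => hP j' (by simpa [Pmat, hk, hk₂] using h),
        fun j' h => ?_⟩
      by_cases hj : j' = j
      · rw [hj]; exact not_lt.mp hg
      · exact hN j' (by simpa [Nmat, hk, hk₂, hj] using h)

end BTree

theorem ind_pow_eq_one {P : Prop} [Decidable P] {n : ℕ} (h : n ≠ 0 → P) : ind P ^ n = 1 := by
  rcases eq_or_ne n 0 with rfl | hn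
  · exact pow_zero _
  · rw [ind, if_pos (h hn), one_pow]

theorem ind_pow_eq_zero {P : Prop} [Decidable P] {n : ℕ} (hP : ¬P) (hn : n ≠ 0) :
    ind P ^ n = 0 := by
  rw [ind, if_neg hP, zero_pow hn]

namespace SensorTree

variable {K : ℕ} (T : SensorTree K)

section LeafState

variable {g : Fin (K - 1) → ℝ} {k : Fin K}

theorem leafState_eq_one (hk : T.tree.RoutesTo g k) : leafState T g k = 1 :=
  Finset.prod_eq_one fun j _ => by
    rw [ind_pow_eq_one (hk.1 j), ind_pow_eq_one (hk.2 j), mul_one]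

theorem leafState_eq_zero (hk : T.tree.RoutesTo g k) {l : Fin K} (hl : l ≠ k) :
    leafState T g l = 0 := by
  obtain ⟨j, hj⟩ :=
    T.tree.exists_diverging_node (T.leaves_complete k) (T.leaves_complete l) hl.symm
  refine Finset.prod_eq_zero (Finset.mem_univ j) ?_
  rcases hj with ⟨hPk, hNl⟩ | ⟨hNk, hPl⟩
  · rw [ind_pow_eq_zero (not_le.2 (hk.1 j hPk)) hNl, mul_zero]
  · rw [ind_pow_eq_zero (not_lt.2 (hk.2 j hNk)) hPl, zero_mul]

theorem sum_mul_leafState (f : Fin K → ℝ) (hk : T.tree.RoutesTo g k) :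
    ∑ l, f l * leafState T g l = f k := by
  rw [Finset.sum_eq_single_of_mem k (Finset.mem_univ k)
    fun l _ hl => by rw [T.leafState_eq_zero hk hl, mul_zero], T.leafState_eq_one hk, mul_one]

end LeafState

section Weights

variable {π : Fin K → ℝ} (hπ : ∀ k, 0 ≤ π k)
include hπ

theorem wp_nonneg (k : Fin K) (j : Fin (K - 1)) : 0 ≤ wp T π k j :=
  mul_nonneg (Nat.cast_nonneg _) (Finset.sum_nonneg fun l _ => hπ l)

theorem wn_nonneg (k : Fin K) (j : Fin (K - 1)) : 0 ≤ wn T π k j :=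
  mul_nonneg (Nat.cast_nonneg _) (Finset.sum_nonneg fun l _ => hπ l)

theorem sum_erase_le_sum_wp_add_wn (k : Fin K) :
    ∑ l ∈ Finset.univ.erase k, π l ≤ ∑ j, (wp T π k j + wn T π k j) := by
  -- `c l j` charges `π l` to the nodes `j` where the paths to `k` and to `l` part ways
  set c : Fin K → Fin (K - 1) → ℝ := fun l j =>
    T.tree.Pmat k j * (if T.tree.Nmat l j = 1 then π l else 0) +
      T.tree.Nmat k j * (if T.tree.Pmat l j = 1 then π l else 0) with hc
  have hc_nonneg : ∀ l j, 0 ≤ c l j := fun l j => by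
    have := hπ l
    simp only [hc]
    split_ifs <;> positivity
  have hc_sum : ∀ j, ∑ l, c l j = wp T π k j + wn T π k j := fun j => by
    simp only [hc, wp, wn, Finset.sum_add_distrib, ← Finset.mul_sum, Finset.sum_filter]
  have hπ_le : ∀ l ∈ Finset.univ.erase k, π l ≤ ∑ j, c l j := by
    intro l hl
    obtain ⟨j, hj⟩ := T.tree.exists_diverging_node (T.leaves_complete k) (T.leaves_complete l)
      (Finset.ne_of_mem_erase hl).symm
    refine le_trans ?_ (Finset.single_le_sum (fun j _ => hc_nonneg l j) (Finset.mem_univ j))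
    have hk1 := T.tree.Pmat_add_Nmat_le_one T.nodes_nodup k j
    have hl1 := T.tree.Pmat_add_Nmat_le_one T.nodes_nodup l j
    rcases hj with ⟨hPk, hNl⟩ | ⟨hNk, hPl⟩
    · simp [hc, show T.tree.Pmat k j = 1 by omega, show T.tree.Nmat l j = 1 by omega,
        show T.tree.Nmat k j = 0 by omega]
    · simp [hc, show T.tree.Nmat k j = 1 by omega, show T.tree.Pmat l j = 1 by omega,
        show T.tree.Pmat k j = 0 by omega]
  calc ∑ l ∈ Finset.univ.erase k, π l
      ≤ ∑ l ∈ Finset.univ.erase k, ∑ j, c l j := Finset.sum_le_sum hπ_le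
    _ ≤ ∑ l, ∑ j, c l j := Finset.sum_le_sum_of_subset_of_nonneg (Finset.erase_subset _ _)
        fun l _ _ => Finset.sum_nonneg fun j _ => hc_nonneg l j
    _ = ∑ j, (wp T π k j + wn T π k j) := by
        rw [Finset.sum_comm]
        exact Finset.sum_congr rfl fun j _ => hc_sum j

variable {φ : ℝ → ℝ} (hφ : ∀ z, 0 ≤ z → 1 ≤ φ z)
  {g : Fin (K - 1) → ℝ} {k : Fin K} (hk : T.tree.RoutesTo g k)
include hφ hk

theorem wp_le_wp_mul (j : Fin (K - 1)) : wp T π k j ≤ wp T π k j * φ (g j) := by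
  rcases eq_or_ne (T.tree.Pmat k j) 0 with h | h
  · simp [wp, h]
  · exact le_mul_of_one_le_right (T.wp_nonneg hπ k j) (hφ _ (hk.1 j h).le)

theorem wn_le_wn_mul (j : Fin (K - 1)) : wn T π k j ≤ wn T π k j * φ (-g j) := by
  rcases eq_or_ne (T.tree.Nmat k j) 0 with h | h
  · simp [wn, h]
  · exact le_mul_of_one_le_right (T.wn_nonneg hπ k j) (hφ _ (neg_nonneg.2 (hk.2 j h)))

end Weights

end SensorTree

theorem tree_risk_le_surrogate_general {K : ℕ} (T : SensorTree K) (Rmax : ℝ) (π : Fin K → ℝ)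
    (hπ : ∀ k, 0 ≤ π k) (φ : ℝ → ℝ) (hφ1 : ∀ z, 0 ≤ z → 1 ≤ φ z)
    (g : Fin (K - 1) → ℝ) :
    ∑ k : Fin K, (Rmax - π k) * leafState T g k
      ≤ Rmax - ∑ k : Fin K, π k
        + Finset.univ.sup' T.univ_nonempty
            (fun k => ∑ j : Fin (K - 1),
              (wp T π k j * φ (g j) + wn T π k j * φ (-(g j)))) := by
  obtain ⟨k₀, -, hk₀⟩ := T.tree.exists_routesTo T.leaves_nodup g
  have hothers : ∑ l ∈ Finset.univ.erase k₀, π l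
      ≤ ∑ j, (wp T π k₀ j * φ (g j) + wn T π k₀ j * φ (-(g j))) :=
    (T.sum_erase_le_sum_wp_add_wn hπ k₀).trans <| Finset.sum_le_sum fun j _ =>
      add_le_add (T.wp_le_wp_mul hπ hφ1 hk₀ j) (T.wn_le_wn_mul hπ hφ1 hk₀ j)
  have hsup := Finset.le_sup' (fun k => ∑ j : Fin (K - 1),
    (wp T π k j * φ (g j) + wn T π k j * φ (-(g j)))) (Finset.mem_univ k₀)
  rw [T.sum_mul_leafState (fun k => Rmax - π k) hk₀,
    ← Finset.add_sum_erase _ _ (Finset.mem_univ k₀)]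
  linarith

/-- If `φ` is nonnegative and satisfies `φ(z) ≥ 1` for all `z ≥ 0` (so that
`φ(g) ≥ 𝟙_{g>0}` and `φ(−g) ≥ 𝟙_{g≤0}`), then the empirical tree risk is at most the
surrogate risk obtained by replacing each indicator with `φ`. -/
theorem tree_risk_le_surrogate {K : ℕ} (T : SensorTree K) (Rmax : ℝ) (π : Fin K → ℝ)
    (hπ : ∀ k, 0 ≤ π k) (φ : ℝ → ℝ) (hφ0 : ∀ z, 0 ≤ φ z) (hφ1 : ∀ z, 0 ≤ z → 1 ≤ φ z)
    (g : Fin (K - 1) → ℝ) :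
    ∑ k : Fin K, (Rmax - π k) * leafState T g k
      ≤ Rmax - ∑ k : Fin K, π k
        + Finset.univ.sup' T.univ_nonempty
            (fun k => ∑ j : Fin (K - 1),
              (wp T π k j * φ (g j) + wn T π k j * φ (-(g j)))) :=
  tree_risk_le_surrogate_general T Rmax π hπ φ hφ1 g
end
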